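/- arXiv:2502.09502 — 4 statements merged into one kernel-verified Lean document; each statement's English description precedes it below -/
import Mathlib

section
/- Define g(β) as the optimal value of min over z ∈ [0,1]^p with 1ᵀz ≤ k and −M z_j ≤ β_j ≤ M z_j of (1/2)∑_j β_j²/z_j (value +∞ if infeasible). Then the convex conjugate of g is g*(α) = TopSum_k(H_M(α_1), …, H_M(α_p)), the sum of the k largest values among the Huber losses of the coordinates of α. -/
/-- The Huber function with threshold `M`. -/
noncomputable def huber (M α : ℝ) : ℝ :=
  if |α| ≤ M then α ^ 2 / 2 else M * |α| - M ^ 2 / 2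

/-- Sum of the `k` largest components of `c`. -/
noncomputable def topSum {p : ℕ} (k : ℕ) (c : Fin p → ℝ) : ℝ :=
  sSup {x : ℝ | ∃ s : Finset (Fin p), s.card = k ∧ x = ∑ j ∈ s, c j}

/-- Feasibility of `β` for the perspective relaxation: there is `z ∈ [0,1]^p` with
`∑ z ≤ k` and `|βⱼ| ≤ M zⱼ` for all `j`. -/
def Feas (p k : ℕ) (M : ℝ) (β : Fin p → ℝ) : Prop :=
  ∃ z : Fin p → ℝ, (∀ j, z j ∈ Set.Icc (0 : ℝ) 1) ∧ (∑ j, z j) ≤ (k : ℝ) ∧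
    ∀ j, |β j| ≤ M * z j

/-- `g(β)`: optimal value of `min (1/2)∑ βⱼ²/zⱼ` over feasible `z`.
(With the perspective convention: the constraint `|βⱼ| ≤ M zⱼ` forces `βⱼ = 0`
whenever `zⱼ = 0`, in which case `βⱼ²/zⱼ = 0/0 = 0` in Lean's real division.) -/
noncomputable def gval (p k : ℕ) (M : ℝ) (β : Fin p → ℝ) : ℝ :=
  sInf {v : ℝ | ∃ z : Fin p → ℝ, (∀ j, z j ∈ Set.Icc (0 : ℝ) 1) ∧
    (∑ j, z j) ≤ (k : ℝ) ∧ (∀ j, |β j| ≤ M * z j) ∧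
    v = (1 / 2) * ∑ j, (β j) ^ 2 / z j}

lemma huber_nonneg {M α : ℝ} (hM : 0 < M) : 0 ≤ huber M α := by
  unfold huber
  split_ifs with h
  · positivity
  · push_neg at h; nlinarith [abs_nonneg α]

lemma hub_key {M : ℝ} (hM : 0 < M) (α t : ℝ) (ht : |t| ≤ M) :
    α * t - t ^ 2 / 2 ≤ huber M α := by
  unfold huber
  obtain ⟨ht1, ht2⟩ := abs_le.mp ht
  split_ifs with h
  · nlinarith [sq_nonneg (α - t)]
  · push_neg at h
    rcases le_or_gt 0 α with h1 | h1
    · rw [abs_of_nonneg h1] at h ⊢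
      nlinarith [mul_nonneg (by linarith : (0:ℝ) ≤ M - t) (by linarith : (0:ℝ) ≤ 2*α - M - t)]
    · rw [abs_of_neg h1] at h ⊢
      nlinarith [mul_nonneg (by linarith : (0:ℝ) ≤ M + t) (by linarith : (0:ℝ) ≤ -2*α - M + t)]

lemma point_ineq {M : ℝ} (hM : 0 < M) (α z β : ℝ) (hz0 : 0 ≤ z) (hβ : |β| ≤ M * z) :
    α * β - 1 / 2 * (β ^ 2 / z) ≤ z * huber M α := by
  rcases eq_or_lt_of_le hz0 with hz | hz
  · have hb : β = 0 := by
      have : |β| ≤ 0 := by rw [← hz] at hβ; simpa using hβ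
      exact abs_eq_zero.mp (le_antisymm this (abs_nonneg β))
    simp [hb, ← hz]
  · have ht : |β / z| ≤ M := by
      rw [abs_div, abs_of_pos hz, div_le_iff₀ hz]
      linarith [hβ]
    have key := hub_key hM α (β / z) ht
    have h2 : z * (α * (β / z) - (β / z) ^ 2 / 2) ≤ z * huber M α :=
      mul_le_mul_of_nonneg_left key (le_of_lt hz)
    have h3 : α * β - 1 / 2 * (β ^ 2 / z) = z * (α * (β / z) - (β / z) ^ 2 / 2) := by
      field_simp
    linarith [h2, h3.le, h3.ge]

noncomputable def clip (M a : ℝ) : ℝ := max (-M) (min M a)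

lemma abs_clip_le {M : ℝ} (hM : 0 < M) (a : ℝ) : |clip M a| ≤ M := by
  rw [abs_le]
  constructor
  · exact le_max_left _ _
  · exact max_le (by linarith) (min_le_left _ _)

lemma clip_eq {M : ℝ} (hM : 0 < M) (a : ℝ) :
    a * clip M a - (clip M a) ^ 2 / 2 = huber M a := by
  unfold clip huber
  rcases le_or_gt a (-M) with h1 | h1
  · have hmin : min M a = a := min_eq_right (by linarith)
    have hmax : max (-M) a = -M := max_eq_left h1
    rw [hmin, hmax]
    have habs : |a| = -a := abs_of_nonpos (by linarith)
    rw [habs]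
    rcases le_or_gt (-a) M with h2 | h2
    · have : a = -M := by linarith
      rw [if_pos (by linarith), this]; ring
    · rw [if_neg (by linarith)]; ring
  · rcases le_or_gt a M with h2 | h2
    · have hmin : min M a = a := min_eq_right h2
      have hmax : max (-M) a = a := max_eq_right (by linarith)
      rw [hmin, hmax, if_pos (abs_le.mpr ⟨by linarith, h2⟩)]; ring
    · have hmin : min M a = M := min_eq_left (by linarith)
      have hmax : max (-M) M = M := max_eq_right (by linarith)
      rw [hmin, hmax, if_neg (by rw [abs_of_pos (by linarith)]; linarith),
        abs_of_pos (by linarith)]; ring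

lemma lp_bound {p k : ℕ} (c z : Fin p → ℝ) (s : Finset (Fin p)) (hs : s.card = k)
    (hk1 : 1 ≤ k)
    (hmax : ∀ i ∉ s, ∀ j ∈ s, c i ≤ c j)
    (hc : ∀ j, 0 ≤ c j) (hz : ∀ j, z j ∈ Set.Icc (0:ℝ) 1) (hzs : ∑ j, z j ≤ (k:ℝ)) :
    ∑ j, z j * c j ≤ ∑ j ∈ s, c j := by
  have hne : s.Nonempty := Finset.card_pos.mp (by omega)
  set m := s.inf' hne c with hm
  have hm_le : ∀ j ∈ s, m ≤ c j := fun j hj => Finset.inf'_le c hj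
  have hm0 : 0 ≤ m := Finset.le_inf' hne c (fun j _ => hc j)
  have hmge : ∀ i ∉ s, c i ≤ m := fun i hi =>
    Finset.le_inf' hne c (fun j hj => hmax i hi j hj)
  have h1 : ∑ j ∈ sᶜ, z j * c j ≤ m * ∑ j ∈ sᶜ, z j := by
    rw [Finset.mul_sum]
    apply Finset.sum_le_sum
    intro i hi
    have hci := hmge i (Finset.mem_compl.mp hi)
    have := (hz i).1
    nlinarith
  have hsplitz := Finset.sum_add_sum_compl s z
  have h2 : ∑ j ∈ sᶜ, z j ≤ (k:ℝ) - ∑ j ∈ s, z j := by linarith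
  have h3 : m * (∑ j ∈ sᶜ, z j) ≤ m * ((k:ℝ) - ∑ j ∈ s, z j) :=
    mul_le_mul_of_nonneg_left h2 hm0
  have hk : (k:ℝ) = ∑ _j ∈ s, (1:ℝ) := by rw [Finset.sum_const, hs]; simp
  have h4 : ∑ j ∈ s, z j * c j + m * ((k:ℝ) - ∑ j ∈ s, z j) ≤ ∑ j ∈ s, c j := by
    rw [hk, ← Finset.sum_sub_distrib, Finset.mul_sum, ← Finset.sum_add_distrib]
    apply Finset.sum_le_sum
    intro j hj
    have h5 := hm_le j hj
    have h6 := (hz j).1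
    have h7 := (hz j).2
    nlinarith
  have hsplit := Finset.sum_add_sum_compl s (fun j => z j * c j)
  linarith

lemma topSum_max {p k : ℕ} (hkp : k ≤ p) (c : Fin p → ℝ) :
    ∃ s : Finset (Fin p), s.card = k ∧
      (∀ s' : Finset (Fin p), s'.card = k → ∑ j ∈ s', c j ≤ ∑ j ∈ s, c j) ∧
      topSum k c = ∑ j ∈ s, c j := by
  obtain ⟨t, -, ht⟩ := Finset.exists_subset_card_eq (s := (Finset.univ : Finset (Fin p))) (n := k) (by simpa using hkp)
  have hne : (Finset.univ.powersetCard k : Finset (Finset (Fin p))).Nonempty :=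
    ⟨t, Finset.mem_powersetCard.mpr ⟨Finset.subset_univ t, ht⟩⟩
  obtain ⟨s, hsmem, hsmax⟩ := Finset.exists_max_image _ (fun s => ∑ j ∈ s, c j) hne
  have hscard : s.card = k := (Finset.mem_powersetCard.mp hsmem).2
  have hmax : ∀ s' : Finset (Fin p), s'.card = k → ∑ j ∈ s', c j ≤ ∑ j ∈ s, c j := by
    intro s' hs'
    exact hsmax s' (Finset.mem_powersetCard.mpr ⟨Finset.subset_univ s', hs'⟩)
  refine ⟨s, hscard, hmax, ?_⟩
  unfold topSum
  apply le_antisymm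
  · refine csSup_le ⟨∑ j ∈ s, c j, s, hscard, rfl⟩ ?_
    rintro x ⟨s', hs', rfl⟩
    exact hmax s' hs'
  · apply le_csSup
    · exact ⟨∑ j ∈ s, c j, by rintro x ⟨s', hs', rfl⟩; exact hmax s' hs'⟩
    · exact ⟨s, hscard, rfl⟩

/-- The convex conjugate of `g` is `g*(α) = TopSum_k(H_M(α₁), …, H_M(α_p))`. -/
theorem conjugate_of_g {p k : ℕ} (hk1 : 1 ≤ k) (hkp : k ≤ p) (M : ℝ) (hM : 0 < M)
    (α : Fin p → ℝ) :
    sSup {v : ℝ | ∃ β : Fin p → ℝ, Feas p k M β ∧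
        v = (∑ j, α j * β j) - gval p k M β}
      = topSum k (fun j => huber M (α j)) := by
  classical
  set c : Fin p → ℝ := fun j => huber M (α j) with hc
  obtain ⟨smax, hsc, hsmax, htop⟩ := topSum_max hkp c
  have hcpos : ∀ j, 0 ≤ c j := fun j => huber_nonneg hM
  have hswap : ∀ i ∉ smax, ∀ j ∈ smax, c i ≤ c j := by
    intro i hi j hj
    have hie : i ∉ smax.erase j := fun h => hi (Finset.mem_of_mem_erase h)
    have hcard : (insert i (smax.erase j)).card = k := by
      rw [Finset.card_insert_of_notMem hie, Finset.card_erase_of_mem hj, hsc]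
      omega
    have := hsmax _ hcard
    rw [Finset.sum_insert hie, Finset.sum_erase_eq_sub hj] at this
    linarith
  have hub : ∀ x : ℝ,
      (∃ β : Fin p → ℝ, Feas p k M β ∧ x = (∑ j, α j * β j) - gval p k M β) →
      x ≤ ∑ j ∈ smax, c j := by
    rintro x ⟨β, ⟨z0, hz0, hz0s, hz0b⟩, rfl⟩
    have hglb : (∑ j, α j * β j) - ∑ j ∈ smax, c j ≤ gval p k M β := by
      unfold gval
      refine le_csInf ⟨(1/2) * ∑ j, β j ^ 2 / z0 j, z0, hz0, hz0s, hz0b, rfl⟩ ?_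
      rintro w ⟨z, hz, hzs, hzb, rfl⟩
      have h1 : (∑ j, α j * β j) - 1/2 * ∑ j, β j ^ 2 / z j ≤ ∑ j, z j * c j := by
        rw [Finset.mul_sum, ← Finset.sum_sub_distrib]
        exact Finset.sum_le_sum fun j _ =>
          point_ineq hM (α j) (z j) (β j) (hz j).1 (hzb j)
      have h2 := lp_bound c z smax hsc hk1 hswap hcpos hz hzs
      linarith
    linarith
  apply le_antisymm
  · rw [htop]
    exact Real.sSup_le (fun x hx => hub x hx) (Finset.sum_nonneg fun j _ => hcpos j)
  · rw [htop]
    set βs : Fin p → ℝ := fun j => if j ∈ smax then clip M (α j) else 0 with hβs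
    set zs : Fin p → ℝ := fun j => if j ∈ smax then (1:ℝ) else 0 with hzsdef
    have hzsIcc : ∀ j, zs j ∈ Set.Icc (0:ℝ) 1 := by
      intro j; simp only [hzsdef, Set.mem_Icc]; split_ifs <;> norm_num
    have hzsum : ∑ j, zs j ≤ (k:ℝ) := by
      have : ∑ j, zs j = (smax.card : ℝ) := by
        simp [hzsdef, Finset.sum_ite_mem, Finset.univ_inter]
      rw [this, hsc]
    have habs : ∀ j, |βs j| ≤ M * zs j := by
      intro j
      simp only [hβs, hzsdef]
      split_ifs with h
      · simpa using abs_clip_le hM (α j)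
      · simp
    have hfeas : Feas p k M βs := ⟨zs, hzsIcc, hzsum, habs⟩
    have heq : ∑ j, (βs j) ^ 2 / zs j = ∑ j ∈ smax, (clip M (α j)) ^ 2 := by
      rw [← Finset.sum_subset (Finset.subset_univ smax)
        (fun x _ hx => by simp [hβs, hzsdef, hx])]
      exact Finset.sum_congr rfl fun j hj => by simp [hβs, hzsdef, hj]
    have hgle : gval p k M βs ≤ 1/2 * ∑ j ∈ smax, (clip M (α j)) ^ 2 := by
      unfold gval
      have hbdd : BddBelow {v : ℝ | ∃ z : Fin p → ℝ, (∀ j, z j ∈ Set.Icc (0 : ℝ) 1) ∧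
          (∑ j, z j) ≤ (k : ℝ) ∧ (∀ j, |βs j| ≤ M * z j) ∧
          v = (1 / 2) * ∑ j, (βs j) ^ 2 / z j} := by
        refine ⟨0, ?_⟩
        rintro w ⟨z, hz, -, -, rfl⟩
        have : 0 ≤ ∑ j, (βs j) ^ 2 / z j :=
          Finset.sum_nonneg fun j _ => div_nonneg (sq_nonneg _) (hz j).1
        linarith
      have hmem : (1/2) * ∑ j, (βs j) ^ 2 / zs j ∈ {v : ℝ | ∃ z : Fin p → ℝ,
          (∀ j, z j ∈ Set.Icc (0 : ℝ) 1) ∧ (∑ j, z j) ≤ (k : ℝ) ∧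
          (∀ j, |βs j| ≤ M * z j) ∧ v = (1 / 2) * ∑ j, (βs j) ^ 2 / z j} :=
        ⟨zs, hzsIcc, hzsum, habs, rfl⟩
      have := csInf_le hbdd hmem
      rw [heq] at this
      linarith
    have hip : ∑ j, α j * βs j = ∑ j ∈ smax, α j * clip M (α j) := by
      rw [← Finset.sum_subset (Finset.subset_univ smax)
        (fun x _ hx => by simp [hβs, hx])]
      exact Finset.sum_congr rfl fun j hj => by simp [hβs, hj]
    have hval : ∑ j ∈ smax, c j
        = (∑ j, α j * βs j) - 1/2 * ∑ j ∈ smax, (clip M (α j)) ^ 2 := by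
      rw [hip, Finset.mul_sum, ← Finset.sum_sub_distrib]
      refine Finset.sum_congr rfl fun j hj => ?_
      rw [hc]
      have := clip_eq hM (α j)
      simp only []
      linarith
    have hstep : ∑ j ∈ smax, c j ≤ (∑ j, α j * βs j) - gval p k M βs := by
      rw [hval]; linarith
    refine le_trans hstep (le_csSup ⟨∑ j ∈ smax, c j, ?_⟩ ⟨βs, hfeas, rfl⟩)
    rintro x hx
    exact hub x hx
end

section
/- Let φ: ℝ^p → ℝ be of the form φ(α) = (1/2)‖α − μ‖² + ρ·ψ(H_M(|α_1|), …, H_M(|α_p|)) where ψ is convex, nondecreasing in each argument, and permutation-invariant, and ρ ≥ 0. Then every minimizer α* of φ satisfies sgn(α*_j) = sgn(μ_j) whenever μ_j ≠ 0 (i.e., α*_j μ_j ≥ 0 for all j). -/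
/-- Sign-preserving property of the prox: any minimizer of
`α ↦ (1/2)‖α − μ‖² + ρ·ψ(H_M(|α₁|), …, H_M(|α_p|))`, where `ψ` is convex,
coordinatewise nondecreasing on nonnegative vectors and permutation invariant,
satisfies `α*ⱼ μⱼ ≥ 0` for all `j` (i.e. `sgn α*ⱼ = sgn μⱼ` whenever `μⱼ ≠ 0`). -/
theorem prox_sign_preserving {p : ℕ} (M ρ : ℝ) (hM : 0 < M) (hρ : 0 ≤ ρ)
    (μ : Fin p → ℝ) (ψ : (Fin p → ℝ) → ℝ)
    (hψconv : ConvexOn ℝ Set.univ ψ)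
    (hψmono : ∀ x y : Fin p → ℝ, (∀ j, 0 ≤ x j) → (∀ j, x j ≤ y j) → ψ x ≤ ψ y)
    (hψperm : ∀ (σ : Equiv.Perm (Fin p)) (x : Fin p → ℝ), ψ (x ∘ σ) = ψ x)
    (αstar : Fin p → ℝ)
    (hmin : ∀ α : Fin p → ℝ,
      (1 / 2) * (∑ j, (αstar j - μ j) ^ 2) + ρ * ψ (fun j => huber M |αstar j|)
        ≤ (1 / 2) * (∑ j, (α j - μ j) ^ 2) + ρ * ψ (fun j => huber M |α j|)) :
    ∀ j, 0 ≤ αstar j * μ j := by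
  intro j
  by_contra hneg
  push_neg at hneg
  set α : Fin p → ℝ := Function.update αstar j (-(αstar j)) with hα
  have habs : ∀ i, |α i| = |αstar i| := by
    intro i
    by_cases h : i = j
    · subst h; simp [hα]
    · simp [hα, Function.update_of_ne h]
  have hpen : (fun i => huber M |α i|) = (fun i => huber M |αstar i|) := by
    funext i; rw [habs]
  have hsum : ∑ i, (α i - μ i) ^ 2 < ∑ i, (αstar i - μ i) ^ 2 := by
    apply Finset.sum_lt_sum
    · intro i _
      by_cases h : i = j
      · subst h
        simp only [hα, Function.update_self]
        nlinarith [hneg]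
      · simp [hα, Function.update_of_ne h]
    · exact ⟨j, Finset.mem_univ j, by
        simp only [hα, Function.update_self]; nlinarith [hneg]⟩
  have := hmin α
  rw [hpen] at this
  nlinarith [this, hsum]
end

section
/- (Merged-block proximal reduction) For weights ρ_j ≥ 0, values μ_j ∈ ℝ, and a block B of indices with N = |B|, P = ∑_{j∈B} ρ_j, S = ∑_{j∈B} |μ_j|, the common value minimizing ν ↦ ∑_{j∈B} [(1/2)(ν − |μ_j|)² + ρ_j H_M(ν)] equals prox_{(P/N) H_M}(S/N), the proximal operator of the scaled Huber function evaluated at the block average. -/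
/-- Merged-block proximal reduction: for a block `B` with `N = |B|`,
`P = ∑_{j∈B} ρⱼ`, `S = ∑_{j∈B} |μⱼ|`, a common value `ν*` minimizes
`ν ↦ ∑_{j∈B} [(1/2)(ν − |μⱼ|)² + ρⱼ H_M(ν)]` iff it equals
`prox_{(P/N) H_M}(S/N)`, i.e. iff it minimizes
`ν ↦ (1/2)(ν − S/N)² + (P/N) H_M(ν)`. -/
theorem merged_block_prox {ι : Type*} (B : Finset ι) (hB : B.Nonempty)
    (M : ℝ) (hM : 0 < M) (ρ : ι → ℝ) (hρ : ∀ j, 0 ≤ ρ j) (μ : ι → ℝ)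
    (νstar : ℝ) :
    (∀ c : ℝ,
        ∑ j ∈ B, ((1 / 2) * (νstar - |μ j|) ^ 2 + ρ j * huber M νstar)
          ≤ ∑ j ∈ B, ((1 / 2) * (c - |μ j|) ^ 2 + ρ j * huber M c)) ↔
    (∀ c : ℝ,
        (1 / 2) * (νstar - (∑ j ∈ B, |μ j|) / (B.card : ℝ)) ^ 2
            + ((∑ j ∈ B, ρ j) / (B.card : ℝ)) * huber M νstar
          ≤ (1 / 2) * (c - (∑ j ∈ B, |μ j|) / (B.card : ℝ)) ^ 2
            + ((∑ j ∈ B, ρ j) / (B.card : ℝ)) * huber M c) := by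
  set N : ℝ := (B.card : ℝ) with hNdef
  have hN : 0 < N := by
    rw [hNdef]; exact_mod_cast Finset.card_pos.mpr hB
  set S : ℝ := ∑ j ∈ B, |μ j| with hS
  set P : ℝ := ∑ j ∈ B, ρ j with hP
  have hkey : ∀ c : ℝ,
      ∑ j ∈ B, ((1 / 2) * (c - |μ j|) ^ 2 + ρ j * huber M c)
        = N * ((1 / 2) * (c - S / N) ^ 2 + (P / N) * huber M c)
          + ((1 / 2) * ∑ j ∈ B, |μ j| ^ 2 - S ^ 2 / (2 * N)) := by
    intro c
    have h1 : ∑ j ∈ B, ((1 / 2) * (c - |μ j|) ^ 2 + ρ j * huber M c)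
        = ∑ j ∈ B, ((1 / 2) * c ^ 2 - c * |μ j| + (1 / 2) * |μ j| ^ 2)
          + P * huber M c := by
      rw [Finset.sum_add_distrib, ← Finset.sum_mul]
      congr 1
      apply Finset.sum_congr rfl
      intro j _
      ring
    rw [h1, Finset.sum_add_distrib, Finset.sum_sub_distrib,
        Finset.sum_const, ← Finset.mul_sum, ← Finset.mul_sum]
    rw [nsmul_eq_mul, ← hNdef, ← hS]
    field_simp
    ring
  constructor
  · intro h c
    have := h c
    rw [hkey c, hkey νstar] at this
    have h2 : N * ((1 / 2) * (νstar - S / N) ^ 2 + (P / N) * huber M νstar)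
        ≤ N * ((1 / 2) * (c - S / N) ^ 2 + (P / N) * huber M c) := by linarith
    exact le_of_mul_le_mul_left h2 hN
  · intro h c
    rw [hkey c, hkey νstar]
    have h2 := h c
    nlinarith [h c]
end

section
/- (Greedy water-filling optimality) Let b_1 ≥ b_2 ≥ … ≥ b_p ≥ 0 and 1 ≤ k ≤ p. Then the minimizer φ* of (1/2)∑_{j=1}^k φ_j² over φ_1 ≥ … ≥ φ_k ≥ 0 with ∑_{j≤l} b_j ≤ ∑_{j≤l} φ_j for all l ≤ k−1 and ∑_{j=1}^k φ_j = ∑_{j=1}^p b_j is given by φ*_j = b_j for j < j₀ and φ*_j = (∑_{i≥j₀} b_i)/(k − j₀ + 1) for j ≥ j₀, where j₀ is the smallest index such that (∑_{i≥j₀} b_i)/(k − j₀ + 1) ≥ b_{j₀}. -/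
lemma WF.sum_filter_lt {n : ℕ} (f : Fin n → ℝ) (F : ℕ → ℝ)
    (hF : ∀ j : Fin n, F (j : ℕ) = f j) (l : ℕ) (hl : l ≤ n) :
    ∑ j ∈ Finset.univ.filter (fun i : Fin n => (i : ℕ) < l), f j
      = ∑ i ∈ Finset.range l, F i := by
  rw [Finset.sum_filter]
  have h1 : ∀ j : Fin n, (if (j : ℕ) < l then f j else 0)
      = (fun i : ℕ => if i < l then F i else 0) (j : ℕ) := by
    intro j; simp only [hF]
  rw [Finset.sum_congr rfl (fun j _ => h1 j),
    Fin.sum_univ_eq_sum_range (fun i => if i < l then F i else 0) n,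
    ← Finset.sum_filter]
  congr 1
  ext x; simp; omega

lemma WF.sum_univ_eq {n : ℕ} (f : Fin n → ℝ) (F : ℕ → ℝ)
    (hF : ∀ j : Fin n, F (j : ℕ) = f j) :
    ∑ j, f j = ∑ i ∈ Finset.range n, F i := by
  rw [← Fin.sum_univ_eq_sum_range F n]
  exact Finset.sum_congr rfl (fun j _ => (hF j).symm)

lemma WF.sum_filter_ge {n : ℕ} (f : Fin n → ℝ) (F : ℕ → ℝ)
    (hF : ∀ j : Fin n, F (j : ℕ) = f j) (m : ℕ) (hm : m ≤ n) :
    ∑ j ∈ Finset.univ.filter (fun i : Fin n => m ≤ (i : ℕ)), f j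
      = ∑ i ∈ Finset.range n, F i - ∑ i ∈ Finset.range m, F i := by
  have h0 := WF.sum_filter_lt f F hF m hm
  have h2 : ∑ j ∈ Finset.univ.filter (fun i : Fin n => m ≤ (i : ℕ)), f j
      + ∑ j ∈ Finset.univ.filter (fun i : Fin n => (i : ℕ) < m), f j = ∑ j, f j := by
    rw [← Finset.sum_union]
    · congr 1; ext x; simp; omega
    · rw [Finset.disjoint_filter]; intro x _ h; omega
  have h3 := WF.sum_univ_eq f F hF
  linarith

lemma WF.chain_le (a : ℕ → ℝ) (n : ℕ) (ha : ∀ i, i + 1 < n → a (i + 1) ≤ a i) :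
    ∀ j, j < n → ∀ i, i ≤ j → a j ≤ a i := by
  intro j
  induction j with
  | zero => intro _ i hi; interval_cases i; rfl
  | succ j ih =>
    intro hj i hi
    rcases Nat.eq_or_lt_of_le hi with h | h
    · rw [h]
    · exact le_trans (ha j hj) (ih (by omega) i (by omega))

lemma WF.abel_nonneg : ∀ (m : ℕ) (a d : ℕ → ℝ),
    (∀ i, i + 1 < m → a (i + 1) ≤ a i) → (∀ i, i < m → 0 ≤ a i) →
    (∀ l, l ≤ m → 0 ≤ ∑ i ∈ Finset.range l, d i) →
    0 ≤ ∑ i ∈ Finset.range m, a i * d i := by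
  intro m
  induction m with
  | zero => intro a d _ _ _; simp
  | succ m ih =>
    intro a d ha ha0 hD
    have key : ∑ i ∈ Finset.range (m + 1), a i * d i
        = (∑ i ∈ Finset.range m, (a i - a m) * d i)
          + a m * ∑ i ∈ Finset.range (m + 1), d i := by
      have h1 : ∑ i ∈ Finset.range m, (a i - a m) * d i
          = ∑ i ∈ Finset.range m, a i * d i - a m * ∑ i ∈ Finset.range m, d i := by
        rw [Finset.mul_sum, ← Finset.sum_sub_distrib]
        exact Finset.sum_congr rfl (fun i _ => by ring)
      rw [Finset.sum_range_succ, Finset.sum_range_succ d, h1]; ring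
    rw [key]
    have h2 : 0 ≤ ∑ i ∈ Finset.range m, (a i - a m) * d i := by
      apply ih
      · intro i hi; have := ha i (by omega); linarith
      · intro i hi
        have := WF.chain_le a (m + 1) ha m (by omega) i (by omega)
        linarith
      · intro l hl; exact hD l (by omega)
    have h3 : 0 ≤ a m * ∑ i ∈ Finset.range (m + 1), d i :=
      mul_nonneg (ha0 m (by omega)) (hD (m + 1) le_rfl)
    linarith

/-- Feasible set of the water-filling problem: nonincreasing nonnegative vectors
`φ` of length `k` whose prefix sums dominate those of `b` (for prefixes of
length `< k`) and whose total sum equals `∑ⱼ bⱼ`. -/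
def WFFeasible {p k : ℕ} (hkp : k ≤ p) (b : Fin p → ℝ) (φ : Fin k → ℝ) : Prop :=
  Antitone φ ∧ (∀ j, 0 ≤ φ j) ∧
  (∀ l : ℕ, l < k →
    ∑ j ∈ Finset.univ.filter (fun i : Fin p => (i : ℕ) < l), b j
      ≤ ∑ j ∈ Finset.univ.filter (fun i : Fin k => (i : ℕ) < l), φ j) ∧
  (∑ j, φ j = ∑ j, b j)

/-- Greedy water-filling optimality: with `b₁ ≥ … ≥ b_p ≥ 0` and `j₀` the smallest
index such that the tail average `(∑_{i ≥ j₀} bᵢ)/(k − j₀)` is at least `b_{j₀}`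
(0-indexed), the vector `φ*` equal to `b` before `j₀` and to that tail average
from `j₀` on is feasible and minimizes `(1/2)∑_{j<k} φⱼ²` over the feasible set. -/
theorem water_filling {p k : ℕ} (hk1 : 1 ≤ k) (hkp : k ≤ p)
    (b : Fin p → ℝ) (hb0 : ∀ j, 0 ≤ b j) (hbdec : Antitone b)
    (j₀ : Fin k)
    (hj₀ : b (Fin.castLE hkp j₀) ≤
      (∑ i ∈ Finset.univ.filter (fun i : Fin p => (j₀ : ℕ) ≤ (i : ℕ)), b i)
        / ((k : ℝ) - (j₀ : ℕ)))
    (hleast : ∀ j : Fin k, j < j₀ →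
      ¬ (b (Fin.castLE hkp j) ≤
        (∑ i ∈ Finset.univ.filter (fun i : Fin p => (j : ℕ) ≤ (i : ℕ)), b i)
          / ((k : ℝ) - (j : ℕ))))
    (φstar : Fin k → ℝ)
    (hφdef : ∀ j : Fin k, φstar j =
      if j < j₀ then b (Fin.castLE hkp j)
      else (∑ i ∈ Finset.univ.filter (fun i : Fin p => (j₀ : ℕ) ≤ (i : ℕ)), b i)
        / ((k : ℝ) - (j₀ : ℕ))) :
    WFFeasible hkp b φstar ∧
    ∀ φ : Fin k → ℝ, WFFeasible hkp b φ →
      (1 / 2) * ∑ j, (φstar j) ^ 2 ≤ (1 / 2) * ∑ j, (φ j) ^ 2 := by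
  obtain ⟨B, hB⟩ : ∃ B : ℕ → ℝ, ∀ j : Fin p, B (j : ℕ) = b j :=
    ⟨fun i => if h : i < p then b ⟨i, h⟩ else 0, fun j => dif_pos j.isLt⟩
  obtain ⟨Ψ, hΨ⟩ : ∃ Ψ : ℕ → ℝ, ∀ j : Fin k, Ψ (j : ℕ) = φstar j :=
    ⟨fun i => if h : i < k then φstar ⟨i, h⟩ else 0, fun j => dif_pos j.isLt⟩
  set m : ℕ := (j₀ : ℕ) with hm
  have hmk : m < k := j₀.isLt
  have hmp : m ≤ p := le_trans (le_of_lt hmk) hkp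
  -- cast facts
  have hkm : (0 : ℝ) < (k : ℝ) - m := by
    have : (m : ℝ) < k := by exact_mod_cast hmk
    linarith
  set T : ℝ := ∑ i ∈ Finset.range p, B i - ∑ i ∈ Finset.range m, B i with hTdef
  have hTeq : ∑ i ∈ Finset.univ.filter (fun i : Fin p => m ≤ (i : ℕ)), b i = T :=
    WF.sum_filter_ge b B hB m hmp
  set c : ℝ := T / ((k : ℝ) - m) with hc
  -- B values of b at indices < p
  have hBval : ∀ i (h : i < p), B i = b ⟨i, h⟩ := fun i h => hB ⟨i, h⟩
  have hBnn : ∀ i, i < p → 0 ≤ B i := fun i h => (hBval i h) ▸ hb0 _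
  have hBdec : ∀ i j, i ≤ j → j < p → B j ≤ B i := by
    intro i j hij hj
    rw [hBval i (lt_of_le_of_lt hij hj), hBval j hj]
    exact hbdec hij
  have hTnn : 0 ≤ T := by
    rw [← hTeq]
    exact Finset.sum_nonneg fun i _ => hb0 i
  have hcnn : 0 ≤ c := div_nonneg hTnn (le_of_lt hkm)
  -- b at castLE j₀ equals B m
  have hcast : ∀ j : Fin k, b (Fin.castLE hkp j) = B (j : ℕ) := by
    intro j
    rw [← hB (Fin.castLE hkp j), Fin.coe_castLE]
  have hcm : B m ≤ c := by
    rw [← hcast j₀]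
    rw [hTeq] at hj₀
    exact hj₀
  -- values of φstar
  have hphi : ∀ j : Fin k, φstar j = if (j : ℕ) < m then B (j : ℕ) else c := by
    intro j
    rw [hφdef j, hTeq, hcast j]
    congr 1
  have hΨval : ∀ i, (h : i < k) → Ψ i = if i < m then B i else c := by
    intro i h
    rw [show i = ((⟨i, h⟩ : Fin k) : ℕ) from rfl, hΨ ⟨i, h⟩, hphi ⟨i, h⟩]
  -- strict inequality before m
  have hblt : ∀ i, i < m → c < B i := by
    intro i hi
    have hm1 : m - 1 < m := by omega
    have hBm1 : c < B (m - 1) := by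
      have hj : (⟨m - 1, by omega⟩ : Fin k) < j₀ := by
        rw [Fin.lt_def]; exact hm1
      have hT1 : ∑ i ∈ Finset.univ.filter (fun i : Fin p => m - 1 ≤ (i : ℕ)), b i
          = T + B (m - 1) := by
        rw [WF.sum_filter_ge b B hB (m - 1) (by omega), hTdef]
        have : ∑ i ∈ Finset.range m, B i
            = ∑ i ∈ Finset.range (m - 1), B i + B (m - 1) := by
          conv_lhs => rw [show m = (m - 1) + 1 by omega]
          rw [Finset.sum_range_succ]
        rw [this]; ring
      have h1 := hleast ⟨m - 1, by omega⟩ hj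
      simp only [hcast, Fin.val_mk] at h1
      rw [hT1] at h1
      push_neg at h1
      have hmc : ((m - 1 : ℕ) : ℝ) = (m : ℝ) - 1 := by
        have h1m : 1 ≤ m := by omega
        push_cast [Nat.cast_sub h1m]
        ring
      rw [hmc, div_lt_iff₀ (by linarith)] at h1
      rw [hc, div_lt_iff₀ hkm]
      nlinarith [h1]
    calc c < B (m - 1) := hBm1
      _ ≤ B i := hBdec i (m - 1) (by omega) (by omega)
  -- prefix sums of Ψ agree with those of B up to m
  have hΨB : ∀ l, l ≤ m → ∑ i ∈ Finset.range l, Ψ i = ∑ i ∈ Finset.range l, B i := by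
    intro l hl
    apply Finset.sum_congr rfl
    intro i hi
    rw [Finset.mem_range] at hi
    rw [hΨval i (by omega), if_pos (by omega)]
  have hkmc : ((k - m : ℕ) : ℝ) = (k : ℝ) - m := by
    push_cast [Nat.cast_sub (le_of_lt hmk)]
    ring
  -- feasibility
  have hfeas : WFFeasible hkp b φstar := by
    refine ⟨?_, ?_, ?_, ?_⟩
    · intro i j hij
      have hij' : (i : ℕ) ≤ (j : ℕ) := hij
      rw [hphi j, hphi i]
      split_ifs with h1 h2 h2
      · exact hBdec i j hij' (by omega)
      · omega
      · exact le_of_lt (hblt i h2)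
      · exact le_rfl
    · intro j
      rw [hphi j]
      split_ifs with h
      · exact hBnn _ (by omega)
      · exact hcnn
    · intro l hl
      rw [WF.sum_filter_lt b B hB l (by omega), WF.sum_filter_lt φstar Ψ hΨ l (le_of_lt hl)]
      by_cases hlm : l ≤ m
      · rw [hΨB l hlm]
      · push_neg at hlm
        rw [← Finset.sum_range_add_sum_Ico B (le_of_lt hlm),
          ← Finset.sum_range_add_sum_Ico Ψ (le_of_lt hlm), hΨB m le_rfl]
        have e2 : ∑ i ∈ Finset.Ico m l, B i ≤ ∑ i ∈ Finset.Ico m l, Ψ i := by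
          apply Finset.sum_le_sum
          intro i hi
          rw [Finset.mem_Ico] at hi
          rw [hΨval i (by omega), if_neg (by omega)]
          calc B i ≤ B m := hBdec m i hi.1 (by omega)
            _ ≤ c := hcm
        linarith
    · rw [WF.sum_univ_eq φstar Ψ hΨ, WF.sum_univ_eq b B hB,
        ← Finset.sum_range_add_sum_Ico Ψ (le_of_lt hmk), hΨB m le_rfl]
      have e2 : ∑ i ∈ Finset.Ico m k, Ψ i = ((k - m : ℕ) : ℝ) * c :=
        calc ∑ i ∈ Finset.Ico m k, Ψ i = ∑ _i ∈ Finset.Ico m k, c :=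
              Finset.sum_congr rfl (fun i hi => by
                rw [Finset.mem_Ico] at hi
                rw [hΨval i hi.2, if_neg (not_lt.2 hi.1)])
          _ = ((k - m : ℕ) : ℝ) * c := by
              rw [Finset.sum_const, Nat.card_Ico, nsmul_eq_mul]
      have e3 : ((k : ℝ) - m) * c = T := by
        rw [hc]
        field_simp
      rw [e2, hkmc, e3, hTdef]
      ring
  refine ⟨hfeas, ?_⟩
  intro φ hφ
  obtain ⟨hφa, hφnn, hφpre, hφsum⟩ := hφ
  obtain ⟨Φ, hΦ⟩ : ∃ Φ : ℕ → ℝ, ∀ j : Fin k, Φ (j : ℕ) = φ j :=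
    ⟨fun i => if h : i < k then φ ⟨i, h⟩ else 0, fun j => dif_pos j.isLt⟩
  have hDk : ∑ i ∈ Finset.range k, (Φ i - Ψ i) = 0 := by
    rw [Finset.sum_sub_distrib, ← WF.sum_univ_eq φ Φ hΦ, ← WF.sum_univ_eq φstar Ψ hΨ,
      hφsum, hfeas.2.2.2]
    ring
  have hDl : ∀ l, l ≤ m → 0 ≤ ∑ i ∈ Finset.range l, (Φ i - Ψ i) := by
    intro l hl
    rw [Finset.sum_sub_distrib]
    have h1 := hφpre l (by omega)
    rw [WF.sum_filter_lt b B hB l (by omega), WF.sum_filter_lt φ Φ hΦ l (by omega)] at h1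
    have h2 := hΨB l hl
    linarith
  have hkey : 0 ≤ ∑ i ∈ Finset.range k, Ψ i * (Φ i - Ψ i) := by
    have split1 : ∑ i ∈ Finset.range k, Ψ i * (Φ i - Ψ i)
        = ∑ i ∈ Finset.range k, (Ψ i - c) * (Φ i - Ψ i)
          + c * ∑ i ∈ Finset.range k, (Φ i - Ψ i) := by
      rw [Finset.mul_sum, ← Finset.sum_add_distrib]
      exact Finset.sum_congr rfl fun i _ => by ring
    rw [split1, hDk, mul_zero, add_zero,
      ← Finset.sum_range_add_sum_Ico (fun i => (Ψ i - c) * (Φ i - Ψ i)) (le_of_lt hmk)]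
    have hz : ∑ i ∈ Finset.Ico m k, (Ψ i - c) * (Φ i - Ψ i) = 0 := by
      apply Finset.sum_eq_zero
      intro i hi
      rw [Finset.mem_Ico] at hi
      rw [hΨval i hi.2, if_neg (not_lt.2 hi.1)]
      ring
    rw [hz, add_zero]
    apply WF.abel_nonneg m (fun i => Ψ i - c) (fun i => Φ i - Ψ i)
    · intro i hi
      show Ψ (i + 1) - c ≤ Ψ i - c
      rw [hΨval i (by omega), hΨval (i + 1) (by omega), if_pos (by omega), if_pos (by omega)]
      have := hBdec i (i + 1) (by omega) (by omega)
      linarith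
    · intro i hi
      show 0 ≤ Ψ i - c
      rw [hΨval i (by omega), if_pos hi]
      have := hblt i hi
      linarith
    · exact hDl
  have hsq1 : ∑ j, (φ j) ^ 2 = ∑ i ∈ Finset.range k, (Φ i) ^ 2 :=
    WF.sum_univ_eq (fun j => (φ j) ^ 2) (fun i => (Φ i) ^ 2) (fun j => by show (Φ (j : ℕ)) ^ 2 = (φ j) ^ 2; rw [hΦ j])
  have hsq2 : ∑ j, (φstar j) ^ 2 = ∑ i ∈ Finset.range k, (Ψ i) ^ 2 :=
    WF.sum_univ_eq (fun j => (φstar j) ^ 2) (fun i => (Ψ i) ^ 2) (fun j => by show (Ψ (j : ℕ)) ^ 2 = (φstar j) ^ 2; rw [hΨ j])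
  rw [hsq1, hsq2]
  have hid : ∑ i ∈ Finset.range k, (Φ i) ^ 2
      = ∑ i ∈ Finset.range k, (Ψ i) ^ 2 + ∑ i ∈ Finset.range k, (Φ i - Ψ i) ^ 2
        + 2 * ∑ i ∈ Finset.range k, Ψ i * (Φ i - Ψ i) := by
    rw [Finset.mul_sum, ← Finset.sum_add_distrib, ← Finset.sum_add_distrib]
    exact Finset.sum_congr rfl fun i _ => by ring
  have hsqnn : 0 ≤ ∑ i ∈ Finset.range k, (Φ i - Ψ i) ^ 2 :=
    Finset.sum_nonneg fun i _ => sq_nonneg _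
  linarith
end
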